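/- Let P and Q be probability distributions on a finite set X × [m], and let C be an invertible m×m row-stochastic matrix. Define P̃(x,ỹ) = Σ_y P(x,y) C(y,ỹ) and Q̃ analogously. Then d_TV(P, Q) ≤ ‖C⁻¹‖_∞ · d_TV(P̃, Q̃), where ‖A‖_∞ = max_i Σ_j |A_{ij}| is the maximum absolute row sum norm. -/
import Mathlib


open Finset

/-- Total variation distance between two distributions on `X × Fin m`. -/
noncomputable def tvDist {X : Type*} [Fintype X] {m : ℕ} (P Q : X → Fin m → ℝ) : ℝ :=
  (1 / 2) * ∑ x, ∑ y, |P x y - Q x y|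

/-- Corruption of the label through a noisy channel `C`. -/
noncomputable def corrupt {X : Type*} [Fintype X] {m : ℕ} (P : X → Fin m → ℝ)
    (C : Fin m → Fin m → ℝ) : X → Fin m → ℝ :=
  fun x yt => ∑ y, P x y * C y yt

/-- `P` is a probability distribution on `X × Fin m`. -/
def IsProbDist {X : Type*} [Fintype X] {m : ℕ} (P : X → Fin m → ℝ) : Prop :=
  (∀ x y, 0 ≤ P x y) ∧ ∑ x, ∑ y, P x y = 1

/-- `C` is a row-stochastic matrix. -/
def RowStochastic {m : ℕ} (C : Matrix (Fin m) (Fin m) ℝ) : Prop :=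
  (∀ i j, 0 ≤ C i j) ∧ ∀ i, ∑ j, C i j = 1

/-- Maximum absolute row sum norm `‖A‖_∞ = max_i ∑_j |A i j|`. -/
noncomputable def maxRowSum {m : ℕ} (A : Matrix (Fin m) (Fin m) ℝ) : ℝ :=
  ⨆ i, ∑ j, |A i j|

theorem tv_le_maxRowSum_inv_mul_tv_corrupt {X : Type*} [Fintype X] {m : ℕ}
    (P Q : X → Fin m → ℝ) (hP : IsProbDist P) (hQ : IsProbDist Q)
    (C Cinv : Matrix (Fin m) (Fin m) ℝ) (hC : RowStochastic C)
    (hCinv₁ : C * Cinv = 1) (hCinv₂ : Cinv * C = 1) :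
    tvDist P Q ≤ maxRowSum Cinv * tvDist (corrupt P (fun i j => C i j)) (corrupt Q (fun i j => C i j)) := by
  rcases Nat.eq_zero_or_pos m with hm | hm
  · subst hm
    simp [tvDist, maxRowSum, Real.iSup_of_isEmpty]
  haveI : Nonempty (Fin m) := ⟨⟨0, hm⟩⟩
  set D : X → Fin m → ℝ := fun x y => P x y - Q x y with hD
  set E : X → Fin m → ℝ := fun x yt =>
    corrupt P (fun i j => C i j) x yt - corrupt Q (fun i j => C i j) x yt with hE
  have hEdef : ∀ x yt, E x yt = ∑ y, D x y * C y yt := by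
    intro x yt
    simp only [hE, hD, corrupt, ← Finset.sum_sub_distrib, sub_mul]
  have hrecover : ∀ x y, D x y = ∑ yt, E x yt * Cinv yt y := by
    intro x y
    simp only [hEdef, Finset.sum_mul, mul_assoc]
    rw [Finset.sum_comm]
    have : ∀ y', ∑ yt, D x y' * (C y' yt * Cinv yt y)
        = D x y' * (C * Cinv) y' y := by
      intro y'
      rw [Matrix.mul_apply, Finset.mul_sum]
    simp only [this, hCinv₁, Matrix.one_apply]
    simp [Finset.sum_ite_eq]
  set M := maxRowSum Cinv with hM
  have hrow : ∀ yt : Fin m, ∑ y, |Cinv yt y| ≤ M := by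
    intro yt
    exact le_ciSup (f := fun i => ∑ j, |Cinv i j|) (Set.Finite.bddAbove (Set.finite_range _)) yt
  have key : ∀ x, ∑ y, |D x y| ≤ M * ∑ yt, |E x yt| := by
    intro x
    calc ∑ y, |D x y| ≤ ∑ y, ∑ yt, |E x yt| * |Cinv yt y| := by
          apply Finset.sum_le_sum
          intro y _
          rw [hrecover x y]
          calc |∑ yt, E x yt * Cinv yt y| ≤ ∑ yt, |E x yt * Cinv yt y| :=
                Finset.abs_sum_le_sum_abs _ _
            _ = ∑ yt, |E x yt| * |Cinv yt y| := by simp [abs_mul]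
      _ = ∑ yt, |E x yt| * ∑ y, |Cinv yt y| := by
          rw [Finset.sum_comm]; simp [Finset.mul_sum]
      _ ≤ ∑ yt, |E x yt| * M := by
          apply Finset.sum_le_sum
          intro yt _
          exact mul_le_mul_of_nonneg_left (hrow yt) (abs_nonneg _)
      _ = M * ∑ yt, |E x yt| := by rw [← Finset.sum_mul]; ring
  have hfinal : ∑ x, ∑ y, |D x y| ≤ M * ∑ x, ∑ yt, |E x yt| := by
    rw [Finset.mul_sum]
    exact Finset.sum_le_sum fun x _ => key x
  unfold tvDist
  calc (1/2) * ∑ x, ∑ y, |P x y - Q x y|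
      ≤ (1/2) * (M * ∑ x, ∑ yt, |E x yt|) := by
        apply mul_le_mul_of_nonneg_left _ (by norm_num)
        exact hfinal
    _ = M * ((1/2) * ∑ x, ∑ yt,
        |corrupt P (fun i j => C i j) x yt - corrupt Q (fun i j => C i j) x yt|) := by
        ring
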